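/- Let V = GF(4)³ with the standard non-degenerate hermitian form h(x,y) = x₁ȳ₁ + x₂ȳ₂ + x₃ȳ₃ (where ȳ = y²), and s(x,y) = h(x,y) + h(y,x). Define the graph Γ on V₁ = {x : h(x,x) = 1} with distinct u, v adjacent iff s(u,v) = 0. Then Γ is a strongly regular graph with parameters (36, 15, 6, 6). -/

import Mathlib

/-- The standard non-degenerate hermitian form on `GF(4)³`, with conjugation `a ↦ a ^ 2`. -/
noncomputable def hermForm (x y : Fin 3 → GaloisField 2 2) : GaloisField 2 2 :=
  ∑ i, x i * (y i) ^ 2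

/-- The associated `GF(2)`-alternating form `s(x,y) = h(x,y) + h(y,x)`. -/
noncomputable def altForm (x y : Fin 3 → GaloisField 2 2) : GaloisField 2 2 :=
  hermForm x y + hermForm y x

/-- The set of vectors `x` with `h(x,x) = 1`. -/
def unitVectors : Set (Fin 3 → GaloisField 2 2) :=
  {x | hermForm x x = 1}

/-- The graph `Γ` on `V₁ = {x : h(x,x) = 1}`, where distinct `u, v` are adjacent iff
`s(u,v) = 0`. -/
def unitGraph : SimpleGraph unitVectors where
  Adj u v := u ≠ v ∧ altForm u.1 v.1 = 0
  symm := by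
    constructor
    rintro u v ⟨hne, hs⟩
    exact ⟨hne.symm, by rwa [altForm, add_comm]⟩
  loopless := ⟨fun u h => h.1 rfl⟩

noncomputable instance : Fintype (GaloisField 2 2) := Fintype.ofFinite _

noncomputable instance : Fintype unitVectors := Fintype.ofFinite _

/-!
Any two fields of order four are isomorphic, so `Γ` is isomorphic to the same graph built over a
computable model of `GF(4)`, namely `ZMod 2 × ZMod 2` with the multiplication of `ZMod 2[ω]`,
`ω² = ω + 1`. On that model the four parameters of strong regularity are decided by evaluation,
and they transfer along the isomorphism.
-/

namespace SimpleGraph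

variable {V W : Type*} {G : SimpleGraph V} {H : SimpleGraph W}

def Iso.commonNeighborsEquiv (e : G ≃g H) (v w : V) :
    G.commonNeighbors v w ≃ H.commonNeighbors (e v) (e w) :=
  e.toEquiv.subtypeEquiv fun _ => (e.map_adj_iff.and e.map_adj_iff).symm

variable [Fintype V] [Fintype W] [DecidableRel G.Adj] [DecidableRel H.Adj]

theorem Iso.card_commonNeighbors (e : G ≃g H) (v w : V) :
    Fintype.card (H.commonNeighbors (e v) (e w)) = Fintype.card (G.commonNeighbors v w) :=
  Fintype.card_congr (e.commonNeighborsEquiv v w).symm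

theorem IsSRGWith.of_iso {n k ℓ μ : ℕ} (e : G ≃g H) (h : G.IsSRGWith n k ℓ μ) :
    H.IsSRGWith n k ℓ μ where
  card := (Fintype.card_congr e.toEquiv).symm.trans h.card
  regular := e.surjective.forall.2 fun v => (e.degree_eq v).trans (h.regular v)
  of_adj := e.surjective.forall₂.2 fun v w hadj =>
    (e.card_commonNeighbors v w).trans (h.of_adj v w (e.map_adj_iff.1 hadj))
  of_not_adj := e.surjective.forall₂.2 fun v w hne hnadj =>
    (e.card_commonNeighbors v w).trans
      (h.of_not_adj (fun hvw => hne (congrArg e hvw)) (mt e.map_adj_iff.2 hnadj))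

end SimpleGraph

/-- `⟨a, b⟩` stands for `a + b ω`, where `ω² = ω + 1`. -/
structure GF4 where
  a : ZMod 2
  b : ZMod 2
deriving DecidableEq, Fintype

namespace GF4

instance : Zero GF4 := ⟨⟨0, 0⟩⟩
instance : One GF4 := ⟨⟨1, 0⟩⟩
instance : Add GF4 := ⟨fun x y => ⟨x.a + y.a, x.b + y.b⟩⟩
instance : Neg GF4 := ⟨fun x => x⟩
instance : Mul GF4 := ⟨fun x y => ⟨x.a * y.a + x.b * y.b, x.a * y.b + x.b * y.a + x.b * y.b⟩⟩
-- `x³ = 1` for `x ≠ 0`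
instance : Inv GF4 := ⟨fun x => x * x⟩

instance : CommRing GF4 where
  add_assoc := by decide
  zero_add := by decide
  add_zero := by decide
  add_comm := by decide
  mul_assoc := by decide
  one_mul := by decide
  mul_one := by decide
  left_distrib := by decide
  right_distrib := by decide
  zero_mul := by decide
  mul_zero := by decide
  mul_comm := by decide
  neg_add_cancel := by decide
  nsmul := nsmulRec
  zsmul := zsmulRec

instance : Field GF4 where
  exists_pair_ne := ⟨0, 1, by decide⟩
  mul_inv_cancel := by decide
  inv_zero := by decide
  nnqsmul := _
  qsmul := _

noncomputable def equivGaloisField : GF4 ≃+* GaloisField 2 2 :=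
  FiniteField.ringEquivOfCardEq <| by
    rw [Fintype.card_eq_nat_card (α := GaloisField 2 2), GaloisField.card 2 2 two_ne_zero]
    rfl

end GF4

open GF4

def modelForm (x y : Fin 3 → GF4) : GF4 :=
  ∑ i, x i * y i ^ 2

def modelGraph : SimpleGraph {x : Fin 3 → GF4 // modelForm x x = 1} where
  Adj u v := u ≠ v ∧ modelForm u v + modelForm v u = 0
  symm := ⟨fun _ _ ⟨hne, hs⟩ => ⟨hne.symm, by rwa [add_comm]⟩⟩
  loopless := ⟨fun _ h => h.1 rfl⟩

instance : DecidableRel modelGraph.Adj := fun u v =>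
  inferInstanceAs (Decidable (u ≠ v ∧ modelForm u v + modelForm v u = 0))

set_option maxRecDepth 1000000 in
set_option maxHeartbeats 12000000 in
theorem modelGraph_isSRGWith : modelGraph.IsSRGWith 36 15 6 6 where
  card := by decide
  regular := by
    show ∀ v, modelGraph.degree v = 15
    decide
  of_adj := by decide
  of_not_adj := by
    show ∀ v w, v ≠ w → ¬modelGraph.Adj v w → Fintype.card (modelGraph.commonNeighbors v w) = 6
    decide

theorem hermForm_map_equivGaloisField (x y : Fin 3 → GF4) :
    hermForm (fun i => equivGaloisField (x i)) (fun i => equivGaloisField (y i)) =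
      equivGaloisField (modelForm x y) := by
  simp only [hermForm, modelForm, map_sum, map_mul, map_pow]

noncomputable def modelGraphIso : modelGraph ≃g unitGraph where
  toEquiv := (Equiv.piCongrRight fun _ => equivGaloisField.toEquiv).subtypeEquiv fun x => by
    change _ ↔ hermForm _ _ = 1
    rw [← map_eq_one_iff _ equivGaloisField.injective, ← hermForm_map_equivGaloisField]
    rfl
  map_rel_iff' := by
    refine and_congr (Equiv.injective _).ne_iff ?_
    change hermForm _ _ + hermForm _ _ = 0 ↔ _
    rw [← map_eq_zero_iff _ equivGaloisField.injective, map_add,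
      ← hermForm_map_equivGaloisField, ← hermForm_map_equivGaloisField]
    rfl

open scoped Classical in
/-- The graph `Γ` on the `36` vectors of `GF(4)³` with `h(x,x) = 1`, with adjacency
`s(u,v) = 0`, is a strongly regular graph with parameters `(36, 15, 6, 6)`. -/
theorem unitGraph_isSRGWith : unitGraph.IsSRGWith 36 15 6 6 :=
  modelGraph_isSRGWith.of_iso modelGraphIso
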